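/- Let R be a commutative ring, and x, y ∈ R^N with N even. Define for i < N/2 the affine functions fᵢ(ζ) = ζ·x_{2i+1} - (ζ-1)·x_{2i} and gᵢ(ζ) = ζ·y_{2i+1} - (ζ-1)·y_{2i}, and let h(ζ) = ∑_{i<N/2} fᵢ(ζ)·gᵢ(ζ). Then h(0) + h(1) = ∑_{i<N} xᵢ·yᵢ. -/
import Mathlib

open Finset

/-- Dimension reduction correctness: with N = 2n and affine interpolants f i, g i of the
consecutive pairs of x, y, the function h(ζ) = ∑ f i ζ · g i ζ satisfies
h(0) + h(1) = ∑_{i<N} x i · y i. -/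
theorem dimension_reduction_h0_h1 {R : Type*} [CommRing R] (n : ℕ) (x y : ℕ → R) :
    (let f : ℕ → R → R := fun i ζ => ζ * x (2 * i + 1) - (ζ - 1) * x (2 * i)
     let g : ℕ → R → R := fun i ζ => ζ * y (2 * i + 1) - (ζ - 1) * y (2 * i)
     let h : R → R := fun ζ => ∑ i ∈ range n, f i ζ * g i ζ
     h 0 + h 1 = ∑ i ∈ range (2 * n), x i * y i) := by
  simp only
  induction n with
  | zero => simp
  | succ k ih =>
    rw [sum_range_succ, sum_range_succ, Nat.mul_succ, sum_range_succ, sum_range_succ]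
    rw [← ih]
    ring
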